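/- For ω ∈ F_n let N(ω) be the number of a ∈ {1, …, n−1} such that b̃_{a-1} = 1 and b̃_a = 0. Then for every ε > 0, the conditional probability μ( (5/18 − ε)·n < N < (5/18 + ε)·n ∣ F_n ) tends to 1 as n → ∞. -/

import Mathlib

open MeasureTheory ProbabilityTheory Filter

/-- `μ` is the infinite product over `ℕ` of the uniform probability measure on
`{-1,0,1} ⊆ ℤ`, characterized by its values on cylinder sets.  (Taking `n = 0`
shows `μ` is a probability measure.) -/
def IsCDGProductMeasure (μ : Measure (ℕ → ℤ)) : Prop :=
  ∀ (n : ℕ) (c : ℕ → ℤ),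
    μ {ω : ℕ → ℤ | ∀ i < n, ω i = c i} =
      ∏ i ∈ Finset.range n,
        (if c i = -1 ∨ c i = 0 ∨ c i = 1 then (1 / 3 : ENNReal) else 0)

/-- `S n b = ∑_{i=0}^{n-1} 2^(n-1-i) b i`. -/
def cdgS (n : ℕ) (b : ℕ → ℤ) : ℤ := ∑ i ∈ Finset.range n, 2 ^ (n - 1 - i) * b i

/-- The standard form `b̃ a` of the sequence `b` for length `n`: the binary digit of
`S = ∑_{i<n} 2^(n-1-i) b i` in position `n-1-a`, so that (in the "first 1" case, where
`1 ≤ S ≤ 2^n − 1`) one has `S = ∑_{a<n} 2^(n-1-a) b̃ a` with each `b̃ a ∈ {0,1}`. -/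
def btilde (n : ℕ) (b : ℕ → ℤ) (a : ℕ) : ℕ := (cdgS n b).toNat / 2 ^ (n - 1 - a) % 2

/-- The "first 1" event `F_n` for length `n`: there is `j < n` with `b j = 1` and
`b k = 0` for all `k < j`. -/
def firstOne (n : ℕ) : Set (ℕ → ℤ) :=
  {b : ℕ → ℤ | ∃ j < n, b j = 1 ∧ ∀ k < j, b k = 0}

/-!
For `ω ∈ F_n` with its first `1` at position `j`, let `s` be the `m = n - j - 1` signed digits
that follow. Then `S = 2 ^ m + value s`, and the standard form is `0 ⋯ 0` followed by the
`m + 1` binary digits of `2 ^ m + value s`. Reading `s` from its least significant end, these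
digits are produced by a borrow automaton, and `N(ω)` is, up to `1`, the number `descents s` of
`10` patterns in its output. Under the uniform measure on `{-1, 0, 1} ^ m` the pair
(borrow, last output digit) is a Markov chain, so the sums of `1`, `descents` and `descents ^ 2`
over the words in each state satisfy linear recursions with explicit solutions. They give
`∑ (36 descents s - (10 m - 13)) ^ 2 = (72 m + 113) 3 ^ m + 144 m - 576`, so by Chebyshev's
inequality `descents s = 5 m / 18 + O(√m)` for all but a vanishing fraction of the words. As
`F_n` has probability at least `1 / 3` and the first `1` comes after position `L` with
probability `3 ^ (-L)`, the conditional probability tends to `1`.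
-/

open Finset

theorem Nat.ofDigits_div_pow_mod {b : ℕ} (hb : 1 < b) {L : List ℕ} (hL : ∀ x ∈ L, x < b)
    (i : ℕ) : Nat.ofDigits b L / b ^ i % b = L.getD i 0 := by
  rw [Nat.ofDigits_div_pow_eq_ofDigits_drop i (by omega) L hL, List.getD_eq_getElem?_getD,
    ← List.head?_drop]
  rcases h : L.drop i with _ | ⟨y, t⟩
  · simp
  · have hy : y < b := hL y (List.mem_of_mem_drop (h ▸ List.mem_cons_self))
    simp [Nat.ofDigits_cons, Nat.mod_eq_of_lt hy]

theorem List.length_filter_mul_le_sum {α : Type*} (L : List α) (p : α → Prop) [DecidablePred p]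
    (f : α → ℝ) {t : ℝ} (hf : ∀ a ∈ L, 0 ≤ f a) (hp : ∀ a ∈ L, p a → t ≤ f a) :
    (L.filter p).length * t ≤ (L.map f).sum := by
  induction L with
  | nil => simp
  | cons a L ih =>
    have ih' := ih (fun b hb => hf b (List.mem_cons_of_mem a hb))
      (fun b hb => hp b (List.mem_cons_of_mem a hb))
    by_cases ha : p a
    · rw [List.filter_cons_of_pos (by simpa using ha), List.length_cons, List.map_cons,
        List.sum_cons, Nat.cast_succ]
      linarith [hp a List.mem_cons_self ha]
    · rw [List.filter_cons_of_neg (by simpa using ha), List.map_cons, List.sum_cons]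
      linarith [hf a List.mem_cons_self]

theorem tendsto_cond_of_tendsto_measure_diff {Ω ι : Type*} [MeasurableSpace Ω] {μ : Measure Ω}
    [IsFiniteMeasure μ] {l : Filter ι} {F G : ι → Set Ω} (hF : ∀ i, MeasurableSet (F i))
    {c : ENNReal} (hc : c ≠ 0) (hFc : ∀ᶠ i in l, c ≤ μ (F i))
    (h : Tendsto (fun i => μ (F i \ G i)) l (nhds 0)) :
    Tendsto (fun i => μ[|F i] (G i)) l (nhds 1) := by
  have hcompl : Tendsto (fun i => μ[|F i] (G i)ᶜ) l (nhds 0) := by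
    refine tendsto_of_tendsto_of_tendsto_of_le_of_le' tendsto_const_nhds
      (by simpa using ENNReal.Tendsto.const_mul h (Or.inr (ENNReal.inv_ne_top.mpr hc)))
      (Eventually.of_forall fun _ => zero_le) ?_
    filter_upwards [hFc] with i hi
    rw [cond_apply (hF i), ← Set.sdiff_eq]
    gcongr
  have hprob : ∀ᶠ i in l, IsProbabilityMeasure μ[|F i] := by
    filter_upwards [hFc] with i hi
    exact cond_isProbabilityMeasure ((pos_iff_ne_zero.mpr hc).trans_le hi).ne'
  refine tendsto_of_tendsto_of_tendsto_of_le_of_le' (g := fun i => 1 - μ[|F i] (G i)ᶜ)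
    (by simpa using ENNReal.Tendsto.sub tendsto_const_nhds hcompl (Or.inl ENNReal.one_ne_top))
    tendsto_const_nhds ?_ ?_ <;> filter_upwards [hprob] with i hi
  · rw [tsub_le_iff_right, ← measure_univ (μ := μ[|F i])]
    exact measure_univ_le_add_compl _
  · exact prob_le_one

def descentCount (w : List ℕ) : ℕ :=
  #{i ∈ range (w.length - 1) | w.getD i 0 = 1 ∧ w.getD (i + 1) 0 = 0}

theorem descentCount_cons (x : ℕ) (w : List ℕ) :
    descentCount (x :: w) = descentCount w + if x = 1 ∧ w.head? = some 0 then 1 else 0 := by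
  rcases w with _ | ⟨y, w⟩
  · simp [descentCount]
  · simp only [descentCount, card_filter, List.length_cons, Nat.add_sub_cancel,
      sum_range_succ' _ w.length, List.getD_cons_succ, List.getD_cons_zero, List.head?_cons,
      Option.some.injEq]

theorem descentCount_replicate_zero_append (k : ℕ) (w : List ℕ) :
    descentCount (List.replicate k 0 ++ w) = descentCount w := by
  induction k with
  | zero => simp
  | succ k ih => simp [List.replicate_succ, descentCount_cons, ih]

theorem card_filter_Ico_eq_descentCount {n : ℕ} {f : ℕ → ℕ} {w : List ℕ}
    (hw : w.length = n) (hf : ∀ a < n, f a = w.getD a 0) :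
    #{a ∈ Ico 1 n | f (a - 1) = 1 ∧ f a = 0} = descentCount w := by
  subst hw
  refine card_nbij' (· - 1) (· + 1) ?_ ?_ ?_ ?_
  all_goals intro a ha
  all_goals simp only [coe_filter, mem_Ico, mem_range, Set.mem_ofPred_eq] at ha ⊢
  · refine ⟨by omega, ?_⟩
    rw [← hf _ (by omega), ← hf _ (by omega), Nat.sub_add_cancel ha.1.1]
    exact ha.2
  · refine ⟨by omega, ?_⟩
    rw [hf _ (by omega), hf _ (by omega)]
    simpa using ha.2
  · omega
  · omega

def descentNumber (n : ℕ) (ω : ℕ → ℤ) : ℕ :=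
  #{a ∈ Ico 1 n | btilde n ω (a - 1) = 1 ∧ btilde n ω a = 0}

namespace SignedBinary

def value : List ℤ → ℤ
  | [] => 0
  | x :: l => x * 2 ^ l.length + value l

/- Words list signed binary digits, most significant first. Reading a word `l` from its least
significant end, the binary digits of `2 ^ l.length + value l` come out of a borrow automaton:
`borrow l` records whether `value l < 0`, and `topBit l` is the digit in position `l.length - 1`
(`topBit [] = true` is the convention that makes `descents_cons` hold for `l = []`). -/
def borrow : List ℤ → Bool
  | [] => false
  | x :: l => if x = 0 then borrow l else decide (x = -1)

def topBit : List ℤ → Bool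
  | [] => true
  | x :: l => if borrow l then decide (x = 0) else decide (x ≠ 0)

theorem borrow_cons (x : ℤ) (l : List ℤ) :
    borrow (x :: l) = if x = 0 then borrow l else decide (x = -1) := rfl

theorem topBit_cons (x : ℤ) (l : List ℤ) :
    topBit (x :: l) = if borrow l then decide (x = 0) else decide (x ≠ 0) := rfl

def highBits : List ℤ → List ℕ
  | [] => []
  | x :: l => (topBit (x :: l)).toNat :: highBits l

def stdWord (l : List ℤ) : List ℕ := (!borrow l).toNat :: highBits l

def descents (l : List ℤ) : ℕ := descentCount (highBits l)

theorem length_highBits (l : List ℤ) : (highBits l).length = l.length := by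
  induction l with
  | nil => rfl
  | cons x l ih => simp [highBits, ih]

theorem descents_cons (x : ℤ) (l : List ℤ) :
    descents (x :: l) =
      descents l + if topBit (x :: l) = true ∧ topBit l = false then 1 else 0 := by
  rw [descents, highBits, descentCount_cons, ← descents]
  rcases l with _ | ⟨y, l⟩
  · simp [highBits, topBit]
  · cases topBit (x :: y :: l) <;> cases h : topBit (y :: l) <;> simp [highBits, h]

theorem value_append (l₁ l₂ : List ℤ) :
    value (l₁ ++ l₂) = value l₁ * 2 ^ l₂.length + value l₂ := by
  induction l₁ with
  | nil => simp [value]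
  | cons x l ih => simp only [List.cons_append, value, ih, List.length_append, pow_add]; ring

theorem value_replicate_zero (k : ℕ) : value (List.replicate k 0) = 0 := by
  induction k with
  | zero => rfl
  | succ k ih => simp [List.replicate_succ, value, ih]

variable {l : List ℤ}

theorem ofDigits_highBits (hl : ∀ x ∈ l, x = -1 ∨ x = 0 ∨ x = 1) :
    ((Nat.ofDigits 2 (highBits l).reverse : ℕ) : ℤ) =
      value l + if borrow l then 2 ^ l.length else 0 := by
  induction l with
  | nil => simp [highBits, value, borrow]
  | cons x l ih =>
    rw [highBits, List.reverse_cons, Nat.ofDigits_append, List.length_reverse, length_highBits,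
      Nat.ofDigits_singleton, Nat.cast_add, Nat.cast_mul, Nat.cast_pow,
      ih fun y hy => hl y (List.mem_cons_of_mem x hy)]
    rcases hl x List.mem_cons_self with rfl | rfl | rfl <;> cases h : borrow l <;>
      simp [value, borrow, topBit, h, pow_succ] <;> ring

theorem ofDigits_stdWord (hl : ∀ x ∈ l, x = -1 ∨ x = 0 ∨ x = 1) :
    ((Nat.ofDigits 2 (stdWord l).reverse : ℕ) : ℤ) = 2 ^ l.length + value l := by
  rw [stdWord, List.reverse_cons, Nat.ofDigits_append, List.length_reverse, length_highBits,
    Nat.ofDigits_singleton, Nat.cast_add, Nat.cast_mul, Nat.cast_pow, ofDigits_highBits hl]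
  cases borrow l <;> simp <;> ring

theorem lt_two_of_mem_stdWord : ∀ b ∈ stdWord l, b < 2 := by
  suffices ∀ b ∈ highBits l, b < 2 by simpa [stdWord, Bool.toNat_le] using this
  induction l with
  | nil => simp [highBits]
  | cons x l ih => simpa [highBits, Bool.toNat_le] using ih

theorem descents_le_descentCount_stdWord :
    descents l ≤ descentCount (stdWord l) ∧ descentCount (stdWord l) ≤ descents l + 1 := by
  rw [stdWord, descentCount_cons, ← descents]
  split_ifs <;> omega

def prefixWord (n : ℕ) (ω : ℕ → ℤ) : List ℤ := (List.range n).map ω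

def suffixWord (n j : ℕ) (ω : ℕ → ℤ) : List ℤ := (prefixWord n ω).drop (j + 1)

theorem value_eq_sum (l : List ℤ) :
    value l = ∑ i ∈ range l.length, 2 ^ (l.length - 1 - i) * l.getD i 0 := by
  induction l with
  | nil => rfl
  | cons x l ih =>
    rw [value, ih, List.length_cons, sum_range_succ']
    simp only [List.getD_cons_succ, List.getD_cons_zero, Nat.add_sub_cancel, Nat.sub_zero]
    rw [add_comm]
    congr 1
    · exact sum_congr rfl fun i hi => by congr 2; omega
    · ring

theorem cdgS_eq_value_prefixWord (n : ℕ) (ω : ℕ → ℤ) :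
    cdgS n ω = value (prefixWord n ω) := by
  rw [value_eq_sum, cdgS, prefixWord, List.length_map, List.length_range]
  refine sum_congr rfl fun i hi => ?_
  rw [List.getD_eq_getElem _ _ (by simpa using hi)]
  simp

theorem getD_prefixWord {n k : ℕ} (ω : ℕ → ℤ) (hk : k < n) :
    (prefixWord n ω).getD k 0 = ω k := by
  simp [prefixWord, hk]

theorem prefixWord_eq_iff {n : ℕ} {ω : ℕ → ℤ} {c : List ℤ} (hc : c.length = n) :
    prefixWord n ω = c ↔ ∀ i < n, ω i = c.getD i 0 := by
  constructor
  · rintro rfl i hi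
    rw [getD_prefixWord ω hi]
  · intro h
    refine List.ext_getElem (by simp [prefixWord, hc]) fun i hi _ => ?_
    simp only [prefixWord, List.getElem_map, List.getElem_range]
    rw [h i (by simpa [prefixWord] using hi), List.getD_eq_getElem]

theorem prefixWord_eq_of_firstOneAt {n j : ℕ} {ω : ℕ → ℤ} (hj : j < n) (h1 : ω j = 1)
    (h0 : ∀ k < j, ω k = 0) :
    prefixWord n ω = List.replicate j 0 ++ 1 :: suffixWord n j ω := by
  conv_lhs => rw [← List.take_append_drop (j + 1) (prefixWord n ω)]
  rw [prefixWord, ← List.map_take, List.take_range, min_eq_left (by omega), List.range_succ,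
    List.map_append, List.map_singleton, h1, List.append_assoc, List.singleton_append]
  congr 1
  exact List.eq_replicate_iff.mpr ⟨by simp, by simpa using h0⟩

theorem value_replicate_zero_append_one_cons (j : ℕ) (s : List ℤ) :
    value (List.replicate j 0 ++ 1 :: s) = 2 ^ s.length + value s := by
  rw [value_append, value_replicate_zero, value]
  ring

theorem length_suffixWord (n j : ℕ) (ω : ℕ → ℤ) :
    (suffixWord n j ω).length = n - (j + 1) := by
  simp [suffixWord, prefixWord]

theorem isDigit_of_mem_suffixWord {n j : ℕ} {ω : ℕ → ℤ}
    (hω : ∀ i, ω i = -1 ∨ ω i = 0 ∨ ω i = 1) :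
    ∀ x ∈ suffixWord n j ω, x = -1 ∨ x = 0 ∨ x = 1 := fun x hx => by
  obtain ⟨i, -, rfl⟩ := List.mem_map.mp (List.mem_of_mem_drop hx)
  exact hω i

def stdForm (n j : ℕ) (ω : ℕ → ℤ) : List ℕ :=
  List.replicate j 0 ++ stdWord (suffixWord n j ω)

theorem length_stdForm {n j : ℕ} (hj : j < n) (ω : ℕ → ℤ) :
    (stdForm n j ω).length = n := by
  simp only [stdForm, List.length_append, List.length_replicate, stdWord, List.length_cons,
    length_highBits, length_suffixWord]
  omega

section FirstOneAt

variable {n j : ℕ} {ω : ℕ → ℤ} (hj : j < n) (h1 : ω j = 1) (h0 : ∀ k < j, ω k = 0)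
  (hω : ∀ i, ω i = -1 ∨ ω i = 0 ∨ ω i = 1)
include hj h1 h0 hω

theorem cdgS_eq_ofDigits_stdForm :
    cdgS n ω = ((Nat.ofDigits 2 (stdForm n j ω).reverse : ℕ) : ℤ) := by
  rw [cdgS_eq_value_prefixWord, prefixWord_eq_of_firstOneAt hj h1 h0,
    value_replicate_zero_append_one_cons, ← ofDigits_stdWord (isDigit_of_mem_suffixWord hω),
    stdForm, List.reverse_append, List.reverse_replicate, Nat.ofDigits_append,
    Nat.ofDigits_replicate_zero, mul_zero, add_zero]

theorem btilde_eq_getD_stdForm {a : ℕ} (ha : a < n) :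
    btilde n ω a = (stdForm n j ω).getD a 0 := by
  have hdig : ∀ b ∈ (stdForm n j ω).reverse, b < 2 := by
    intro b hb
    rcases List.mem_append.mp (List.mem_reverse.mp hb) with hb | hb
    · simp [List.eq_of_mem_replicate hb]
    · exact lt_two_of_mem_stdWord b hb
  rw [btilde, cdgS_eq_ofDigits_stdForm hj h1 h0 hω, Int.toNat_natCast,
    Nat.ofDigits_div_pow_mod one_lt_two hdig,
    List.getD_reverse _ (by simp [length_stdForm hj]; omega), length_stdForm hj]
  congr 1
  omega

theorem descents_le_descentNumber :
    descents (suffixWord n j ω) ≤ descentNumber n ω ∧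
      descentNumber n ω ≤ descents (suffixWord n j ω) + 1 := by
  rw [descentNumber, card_filter_Ico_eq_descentCount (length_stdForm hj ω)
    fun a ha => btilde_eq_getD_stdForm hj h1 h0 hω ha, stdForm, descentCount_replicate_zero_append]
  exact descents_le_descentCount_stdWord

end FirstOneAt

def digitStrings : ℕ → List (List ℤ)
  | 0 => [[]]
  | m + 1 => (digitStrings m).flatMap fun l => [-1 :: l, 0 :: l, 1 :: l]

theorem mem_digitStrings {m : ℕ} {l : List ℤ} :
    l ∈ digitStrings m ↔ l.length = m ∧ ∀ x ∈ l, x = -1 ∨ x = 0 ∨ x = 1 := by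
  induction m generalizing l with
  | zero => simp +contextual [digitStrings, List.length_eq_zero_iff]
  | succ m ih =>
    rcases l with _ | ⟨x, l⟩
    · simp [digitStrings]
    · simp only [digitStrings, List.mem_flatMap, List.mem_cons, List.not_mem_nil, or_false,
        List.cons.injEq, List.length_cons, ih]
      constructor
      · rintro ⟨l', hl', (⟨rfl, rfl⟩ | ⟨rfl, rfl⟩ | ⟨rfl, rfl⟩)⟩ <;> simp_all
      · rintro ⟨hlen, hx⟩
        refine ⟨l, ⟨by omega, fun y hy => hx y (Or.inr hy)⟩, ?_⟩
        rcases hx x (Or.inl rfl) with rfl | rfl | rfl <;> simp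

theorem replicate_append_one_cons_mem_digitStrings {j m : ℕ} {s : List ℤ}
    (hs : s ∈ digitStrings m) : List.replicate j 0 ++ 1 :: s ∈ digitStrings (j + 1 + m) := by
  obtain ⟨hlen, hdig⟩ := mem_digitStrings.mp hs
  refine mem_digitStrings.mpr ⟨by simp [hlen]; omega, fun x hx => ?_⟩
  rcases List.mem_append.mp hx with hx | hx | ⟨_, hx⟩
  · simp [List.eq_of_mem_replicate hx]
  · simp
  · exact hdig x hx

theorem sum_digitStrings_succ {M : Type*} [AddCommMonoid M] (m : ℕ) (f : List ℤ → M) :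
    ((digitStrings (m + 1)).map f).sum =
      ((digitStrings m).map fun l => f (-1 :: l) + f (0 :: l) + f (1 :: l)).sum := by
  rw [digitStrings]
  induction digitStrings m with
  | nil => simp
  | cons l L ih => simp [ih, add_assoc]

def stateSum (m : ℕ) (c d : Bool) (φ : ℤ → ℤ) : ℤ :=
  ((digitStrings m).map fun l => if borrow l = c ∧ topBit l = d then φ (descents l) else 0).sum

-- The new state and the increment of `descents` depend only on the state of `l` and the new
-- digit, so the state sums of length `m + 1` are combinations of those of length `m`.
theorem stateSum_succ (m : ℕ) (φ : ℤ → ℤ) :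
    stateSum (m + 1) false false φ = stateSum m false false φ + stateSum m false true φ +
        stateSum m true false φ + stateSum m true true φ ∧
    stateSum (m + 1) false true φ =
        stateSum m false false (fun z => φ (z + 1)) + stateSum m false true φ ∧
    stateSum (m + 1) true false φ = stateSum m true false φ + stateSum m true true φ ∧
    stateSum (m + 1) true true φ = stateSum m false false (fun z => φ (z + 1)) +
        stateSum m false true φ + stateSum m true false (fun z => φ (z + 1)) +
        stateSum m true true φ := by
  refine ⟨?_, ?_, ?_, ?_⟩ <;>
  · simp only [stateSum, sum_digitStrings_succ, ← List.sum_map_add]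
    congr 1
    refine List.map_congr_left fun l _ => ?_
    cases hb : borrow l <;> cases ht : topBit l <;>
      simp [borrow_cons, topBit_cons, descents_cons, hb, ht]

theorem stateSum_quadratic (m : ℕ) (c d : Bool) (a b e : ℤ) :
    stateSum m c d (fun z => a * z ^ 2 + b * z + e) = a * stateSum m c d (fun z => z ^ 2) +
      b * stateSum m c d (fun z => z) + e * stateSum m c d (fun _ => 1) := by
  simp only [stateSum, ← List.sum_map_mul_left, ← List.sum_map_add]
  congr 1
  refine List.map_congr_left fun l _ => ?_
  split_ifs <;> ring

theorem stateSum_add_one (m : ℕ) (c d : Bool) :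
    stateSum m c d (fun z => z + 1) =
      stateSum m c d (fun z => z) + stateSum m c d (fun _ => 1) := by
  simpa using stateSum_quadratic m c d 0 1 1

theorem stateSum_add_one_sq (m : ℕ) (c d : Bool) :
    stateSum m c d (fun z => (z + 1) ^ 2) = stateSum m c d (fun z => z ^ 2) +
      2 * stateSum m c d (fun z => z) + stateSum m c d (fun _ => 1) := by
  rw [show (fun z : ℤ => (z + 1) ^ 2) = fun z => 1 * z ^ 2 + 2 * z + 1 from
    funext fun z => by ring, stateSum_quadratic, one_mul, one_mul]

-- Solutions of the recursions `stateSum_succ`, scaled so that each induction step is an integer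
-- linear combination of the previous identities.
theorem stateSum_one {m : ℕ} (hm : 1 ≤ m) :
    6 * stateSum m false false (fun _ => 1) = 2 * 3 ^ m ∧
    6 * stateSum m false true (fun _ => 1) = 3 ^ m + 3 ∧
    6 * stateSum m true false (fun _ => 1) = 3 ^ m - 3 ∧
    6 * stateSum m true true (fun _ => 1) = 2 * 3 ^ m := by
  induction m, hm using Nat.le_induction with
  | base => decide
  | succ m _ ih =>
    obtain ⟨ha, hb, hc, hd⟩ := ih
    obtain ⟨sa, sb, sc, sd⟩ := stateSum_succ m (fun _ => 1)
    rw [sa, sb, sc, sd]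
    exact ⟨by linear_combination ha + hb + hc + hd, by linear_combination ha + hb,
      by linear_combination hc + hd, by linear_combination ha + hb + hc + hd⟩

theorem stateSum_id {m : ℕ} (hm : 2 ≤ m) :
    108 * stateSum m false false (fun z => z) = (10 * m - 23) * 3 ^ m + 27 ∧
    108 * stateSum m false true (fun z => z) = (5 * m - 1) * 3 ^ m + 27 * m - 27 ∧
    108 * stateSum m true false (fun z => z) = (5 * m - 10) * 3 ^ m - 27 * m + 54 ∧
    108 * stateSum m true true (fun z => z) = (10 * m - 5) * 3 ^ m - 27 := by
  induction m, hm using Nat.le_induction with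
  | base => decide
  | succ m hm ih =>
    obtain ⟨ha, hb, hc, hd⟩ := ih
    obtain ⟨ha₀, -, hc₀, -⟩ := stateSum_one (by omega : 1 ≤ m)
    obtain ⟨sa, sb, sc, sd⟩ := stateSum_succ m (fun z => z)
    rw [sa, sb, sc, sd, stateSum_add_one, stateSum_add_one]
    push_cast
    exact ⟨by linear_combination ha + hb + hc + hd, by linear_combination ha + 18 * ha₀ + hb,
      by linear_combination hc + hd,
      by linear_combination ha + 18 * ha₀ + hb + hc + 18 * hc₀ + hd⟩

theorem stateSum_sq {m : ℕ} (hm : 3 ≤ m) :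
    1944 * stateSum m false false (fun z => z ^ 2) =
      50 * m ^ 2 * 3 ^ m - 194 * m * 3 ^ m + 285 * 3 ^ m + 486 * m - 1701 ∧
    1944 * stateSum m false true (fun z => z ^ 2) =
      25 * m ^ 2 * 3 ^ m + 8 * m * 3 ^ m + 3 * 3 ^ m + 243 * m ^ 2 - 972 * m + 1701 ∧
    1944 * stateSum m true false (fun z => z ^ 2) =
      25 * m ^ 2 * 3 ^ m - 82 * m * 3 ^ m + 102 * 3 ^ m - 243 * m ^ 2 + 1458 * m - 2430 ∧
    1944 * stateSum m true true (fun z => z ^ 2) =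
      50 * m ^ 2 * 3 ^ m - 14 * m * 3 ^ m + 33 * 3 ^ m - 486 * m + 1215 := by
  induction m, hm using Nat.le_induction with
  | base => decide
  | succ m hm ih =>
    obtain ⟨ha, hb, hc, hd⟩ := ih
    obtain ⟨ha₀, -, hc₀, -⟩ := stateSum_one (by omega : 1 ≤ m)
    obtain ⟨ha₁, -, hc₁, -⟩ := stateSum_id (by omega : 2 ≤ m)
    obtain ⟨sa, sb, sc, sd⟩ := stateSum_succ m (fun z => z ^ 2)
    rw [sa, sb, sc, sd, stateSum_add_one_sq, stateSum_add_one_sq]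
    push_cast
    exact ⟨by linear_combination ha + hb + hc + hd,
      by linear_combination ha + 36 * ha₁ + 324 * ha₀ + hb, by linear_combination hc + hd,
      by linear_combination ha + 36 * ha₁ + 324 * ha₀ + hb + hc + 36 * hc₁ + 324 * hc₀ +
        hd⟩

theorem sum_map_descents (m : ℕ) (φ : ℤ → ℤ) :
    ((digitStrings m).map fun l => φ (descents l)).sum = stateSum m false false φ +
      stateSum m false true φ + stateSum m true false φ + stateSum m true true φ := by
  simp only [stateSum, ← List.sum_map_add]
  congr 1
  refine List.map_congr_left fun l _ => ?_
  cases borrow l <;> cases topBit l <;> simp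

theorem sum_sq_deviation {m : ℕ} (hm : 3 ≤ m) :
    ((digitStrings m).map fun l => (36 * (descents l : ℤ) - (10 * m - 13)) ^ 2).sum =
      (72 * m + 113) * (3 : ℤ) ^ m + 144 * m - 576 := by
  set e : ℤ := 10 * m - 13
  obtain ⟨ha₀, hb₀, hc₀, hd₀⟩ := stateSum_one (by omega : 1 ≤ m)
  obtain ⟨ha₁, hb₁, hc₁, hd₁⟩ := stateSum_id (by omega : 2 ≤ m)
  obtain ⟨ha₂, hb₂, hc₂, hd₂⟩ := stateSum_sq hm
  rw [sum_map_descents m (fun z => (36 * z - e) ^ 2),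
    show (fun z : ℤ => (36 * z - e) ^ 2) = fun z => 1296 * z ^ 2 + -72 * e * z + e ^ 2 from
      funext fun z => by ring]
  simp only [stateSum_quadratic]
  refine mul_left_cancel₀ (show (6 : ℤ) ≠ 0 by norm_num) ?_
  linear_combination 4 * (ha₂ + hb₂ + hc₂ + hd₂) - 4 * e * (ha₁ + hb₁ + hc₁ + hd₁) +
    e ^ 2 * (ha₀ + hb₀ + hc₀ + hd₀)

theorem length_filter_deviation_le {m : ℕ} (hm : 3 ≤ m) {t : ℝ} (ht : 0 ≤ t) :
    ((digitStrings m).filter fun l => t ≤ |36 * (descents l : ℝ) - (10 * m - 13)|).length *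
      t ^ 2 ≤ 200 * (m + 1) * 3 ^ m := by
  calc _ ≤ (((digitStrings m).map fun l => (36 * (descents l : ℤ) - (10 * m - 13)) ^ 2).map
          (Int.cast : ℤ → ℝ)).sum := by
        rw [List.map_map]
        refine List.length_filter_mul_le_sum _ _ _ (fun _ _ => by simp [sq_nonneg]) fun l _ hl => ?_
        simp only [Function.comp_apply, Int.cast_pow, Int.cast_sub, Int.cast_mul, Int.cast_ofNat,
          Int.cast_natCast, ← sq_abs (36 * (descents l : ℝ) - _)]
        exact pow_le_pow_left₀ ht hl 2
    _ = (72 * m + 113) * 3 ^ m + 144 * m - 576 := by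
        rw [← Int.cast_list_sum, sum_sq_deviation hm]
        push_cast
        ring
    _ ≤ 200 * (m + 1) * 3 ^ m := by
        have h3 : (3 : ℝ) ≤ 3 ^ m := le_self_pow₀ (by norm_num) (by omega)
        nlinarith [mul_le_mul_of_nonneg_left h3 m.cast_nonneg]

end SignedBinary

open SignedBinary

theorem measurableSet_firstOne (n : ℕ) : MeasurableSet (firstOne n) := by
  have : firstOne n = ⋃ j ∈ range n, {ω | ω j = 1} ∩ ⋂ k ∈ range j, {ω | ω k = 0} :=
      by
    ext ω
    simp only [firstOne, Set.mem_iUnion, Set.mem_inter_iff, Set.mem_iInter, mem_range,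
      exists_prop, Set.mem_ofPred_eq]
  rw [this]
  measurability

def typicalSet (ε : ℝ) (n : ℕ) : Set (ℕ → ℤ) :=
  {ω | (5 / 18 - ε) * n < descentNumber n ω ∧ (descentNumber n ω : ℝ) < (5 / 18 + ε) * n}

namespace IsCDGProductMeasure

variable {μ : Measure (ℕ → ℤ)} (hμ : IsCDGProductMeasure μ)
include hμ

theorem isProbabilityMeasure : IsProbabilityMeasure μ := ⟨by simpa using hμ 0 0⟩

theorem measure_prefixWord_eq {n : ℕ} {c : List ℤ} (hc : c ∈ digitStrings n) :
    μ {ω | prefixWord n ω = c} = (1 / 3) ^ n := by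
  obtain ⟨hlen, hdig⟩ := mem_digitStrings.mp hc
  simp_rw [prefixWord_eq_iff hlen]
  rw [hμ n, prod_congr rfl fun i hi => if_pos (hdig _ ?_), prod_const, card_range]
  rw [List.getD_eq_getElem _ _ (by simpa [hlen] using hi)]
  exact List.getElem_mem _

theorem ae_isDigit : ∀ᵐ ω ∂μ, ∀ i, ω i = -1 ∨ ω i = 0 ∨ ω i = 1 := by
  refine ae_all_iff.mpr fun i => ae_iff.mpr ?_
  refine measure_mono_null (t := ⋃ (c : List ℤ) (_ : ¬(c.getD i 0 = -1 ∨ c.getD i 0 = 0 ∨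
    c.getD i 0 = 1)), {ω | ∀ k < i + 1, ω k = c.getD k 0}) ?_ ?_
  · intro ω hω
    refine Set.mem_iUnion₂.mpr ⟨prefixWord (i + 1) ω, ?_, fun k hk => ?_⟩
    · rwa [getD_prefixWord ω (Nat.lt_succ_self i)]
    · exact (getD_prefixWord ω hk).symm
  · refine measure_iUnion_null fun c => measure_iUnion_null fun hc => ?_
    rw [hμ]
    exact prod_eq_zero (mem_range.mpr (Nat.lt_succ_self i)) (if_neg hc)

theorem measure_le_of_prefixWord_mem {n : ℕ} {C : List (List ℤ)}
    (hC : ∀ c ∈ C, c ∈ digitStrings n) {Q : Set (ℕ → ℤ)}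
    (hQ : ∀ ω ∈ Q, (∀ i, ω i = -1 ∨ ω i = 0 ∨ ω i = 1) → prefixWord n ω ∈ C) :
    μ Q ≤ ENNReal.ofReal (C.length / 3 ^ n) := by
  classical
  calc μ Q ≤ μ (⋃ c ∈ C.toFinset, {ω | prefixWord n ω = c}) := by
        refine measure_mono_ae ?_
        filter_upwards [hμ.ae_isDigit] with ω hω hωQ
        exact Set.mem_biUnion (List.mem_toFinset.mpr (hQ ω hωQ hω)) rfl
    _ ≤ ∑ c ∈ C.toFinset, μ {ω | prefixWord n ω = c} := measure_biUnion_finset_le _ _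
    _ = C.toFinset.card * (1 / 3) ^ n := by
        rw [sum_congr rfl fun c hc => hμ.measure_prefixWord_eq (hC c (List.mem_toFinset.mp hc)),
          sum_const, nsmul_eq_mul]
    _ ≤ C.length * (1 / 3) ^ n := by gcongr; exact_mod_cast List.toFinset_card_le C
    _ = ENNReal.ofReal (C.length / 3 ^ n) := by
        rw [ENNReal.ofReal_div_of_pos (by positivity), ENNReal.ofReal_natCast,
          ENNReal.ofReal_pow (by norm_num), ENNReal.ofReal_ofNat, one_div, ← ENNReal.inv_pow,
          div_eq_mul_inv]

theorem measure_le_of_large_deviation {n j : ℕ} (hj : j + 4 ≤ n) {t : ℝ} (ht : 0 < t)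
    {Q : Set (ℕ → ℤ)}
    (hQ : ∀ ω ∈ Q, (∀ i, ω i = -1 ∨ ω i = 0 ∨ ω i = 1) →
      ω j = 1 ∧ (∀ k < j, ω k = 0) ∧
      t ≤ |36 * (descents (suffixWord n j ω) : ℝ) - (10 * ((n - (j + 1) : ℕ) : ℝ) - 13)|) :
    μ Q ≤ ENNReal.ofReal (200 * n / t ^ 2) := by
  set m := n - (j + 1)
  have hn : j + 1 + m = n := by omega
  set bad := (digitStrings m).filter fun l => t ≤ |36 * (descents l : ℝ) - (10 * m - 13)|
  refine (hμ.measure_le_of_prefixWord_mem (n := n) (C := bad.map (List.replicate j 0 ++ 1 :: ·))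
    ?_ ?_).trans (ENNReal.ofReal_le_ofReal ?_)
  · intro c hc
    obtain ⟨s, hs, rfl⟩ := List.mem_map.mp hc
    exact hn ▸ replicate_append_one_cons_mem_digitStrings (List.mem_filter.mp hs).1
  · intro ω hωQ hω
    obtain ⟨h1, h0, hdev⟩ := hQ ω hωQ hω
    rw [prefixWord_eq_of_firstOneAt (by omega) h1 h0]
    refine List.mem_map.mpr ⟨_, List.mem_filter.mpr ⟨mem_digitStrings.mpr
      ⟨length_suffixWord n j ω, isDigit_of_mem_suffixWord hω⟩, by simpa using hdev⟩, rfl⟩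
  · have hcount := length_filter_deviation_le (m := m) (by omega) ht.le
    have hpow : (3 : ℝ) ^ m ≤ 3 ^ n := pow_le_pow_right₀ (by norm_num) (by omega)
    have hmn : (m : ℝ) + 1 ≤ n := by exact_mod_cast (by omega : m + 1 ≤ n)
    rw [List.length_map, div_le_div_iff₀ (by positivity) (by positivity)]
    calc (bad.length : ℝ) * t ^ 2 ≤ 200 * (m + 1) * 3 ^ m := hcount
      _ ≤ 200 * n * 3 ^ n := by gcongr

section Typical

variable {ε : ℝ} (hε : 0 < ε)
include hε

theorem measure_firstOneAt_diff_typicalSet_le {n j L : ℕ} (hjL : j < L) (hLn : L + 4 ≤ n)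
    (hn : 10 * L + 23 ≤ 18 * ε * n) :
    μ ({ω | ω j = 1 ∧ ∀ k < j, ω k = 0} \ typicalSet ε n) ≤
      ENNReal.ofReal (50 / (81 * ε ^ 2) / n) := by
  have hn0 : (0 : ℝ) < n := by exact_mod_cast (by omega : 0 < n)
  -- Chebyshev at `t = 18 ε n`; the margin `10 L + 23` absorbs `N - descents ∈ [0, 1]` and the
  -- offset `j < L` between `m` and `n`.
  convert hμ.measure_le_of_large_deviation (n := n) (j := j) (by omega) (t := 18 * ε * n)
    (by positivity) ?_ using 2
  · field_simp
    ring
  rintro ω ⟨⟨h1, h0⟩, hG⟩ hω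
  refine ⟨h1, h0, ?_⟩
  obtain ⟨hlo, hhi⟩ := descents_le_descentNumber (by omega : j < n) h1 h0 hω
  have hlo' : (descents (suffixWord n j ω) : ℝ) ≤ descentNumber n ω := by exact_mod_cast hlo
  have hhi' : (descentNumber n ω : ℝ) ≤ descents (suffixWord n j ω) + 1 := by
    exact_mod_cast hhi
  have hjL' : (j : ℝ) + 1 ≤ L := by exact_mod_cast hjL
  simp only [typicalSet, Set.mem_ofPred_eq, not_and_or, not_lt] at hG
  rw [Nat.cast_sub (by omega), le_abs']
  push_cast
  rcases hG with hG | hG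
  · left; linarith
  · right; linarith

theorem measure_firstOne_diff_typicalSet_le {n L : ℕ} (hLn : L + 4 ≤ n)
    (hn : 10 * L + 23 ≤ 18 * ε * n) :
    μ (firstOne n \ typicalSet ε n) ≤
      L * ENNReal.ofReal (50 / (81 * ε ^ 2) / n) + (1 / 3) ^ L := by
  have hcover : firstOne n \ typicalSet ε n ⊆
      (⋃ j ∈ range L, {ω | ω j = 1 ∧ ∀ k < j, ω k = 0} \ typicalSet ε n) ∪
        {ω | ∀ k < L, ω k = 0} := by
    rintro ω ⟨⟨j, -, h1, h0⟩, hG⟩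
    by_cases hj : j < L
    · exact Or.inl (Set.mem_biUnion (mem_range.mpr hj) ⟨⟨h1, h0⟩, hG⟩)
    · exact Or.inr fun k hk => h0 k (by omega)
  have hzeros : μ {ω | ∀ k < L, ω k = 0} = (1 / 3) ^ L := by simpa using hμ L 0
  calc _ ≤ μ (⋃ j ∈ range L, {ω | ω j = 1 ∧ ∀ k < j, ω k = 0} \ typicalSet ε n) +
        μ {ω | ∀ k < L, ω k = 0} := (measure_mono hcover).trans (measure_union_le _ _)
    _ ≤ ∑ j ∈ range L, ENNReal.ofReal (50 / (81 * ε ^ 2) / n) + (1 / 3) ^ L := by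
        rw [hzeros]
        gcongr
        exact (measure_biUnion_finset_le _ _).trans (sum_le_sum fun j hj =>
          hμ.measure_firstOneAt_diff_typicalSet_le hε (mem_range.mp hj) hLn hn)
    _ = _ := by rw [sum_const, card_range, nsmul_eq_mul]

theorem tendsto_measure_firstOne_diff_typicalSet :
    Tendsto (fun n => μ (firstOne n \ typicalSet ε n)) atTop (nhds 0) := by
  rw [ENNReal.tendsto_nhds_zero]
  intro η hη
  have hη2 : (0 : ENNReal) < η / 2 := ENNReal.half_pos hη.ne'
  obtain ⟨L, hL⟩ := ((ENNReal.tendsto_pow_atTop_nhds_zero_of_lt_one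
    (by norm_num : (1 / 3 : ENNReal) < 1)).eventually (Iic_mem_nhds hη2)).exists
  have hhead : Tendsto (fun n : ℕ => (L : ENNReal) * ENNReal.ofReal (50 / (81 * ε ^ 2) / n))
      atTop (nhds 0) := by
    have := ENNReal.tendsto_ofReal (tendsto_const_div_atTop_nhds_zero_nat (50 / (81 * ε ^ 2)))
    rw [ENNReal.ofReal_zero] at this
    simpa using ENNReal.Tendsto.const_mul this (Or.inr (ENNReal.natCast_ne_top L))
  filter_upwards [hhead.eventually (Iic_mem_nhds hη2), eventually_ge_atTop (L + 4),
    tendsto_natCast_atTop_atTop.eventually_ge_atTop ((10 * L + 23) / (18 * ε))] with n hhead hLn hn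
  rw [div_le_iff₀ (by positivity)] at hn
  calc _ ≤ L * ENNReal.ofReal (50 / (81 * ε ^ 2) / n) + (1 / 3) ^ L :=
        hμ.measure_firstOne_diff_typicalSet_le hε hLn (by linarith)
    _ ≤ η / 2 + η / 2 := add_le_add hhead hL
    _ = η := ENNReal.add_halves η

end Typical

end IsCDGProductMeasure

/-- with `N(ω)` the number of `a ∈ {1,…,n−1}` with `b̃_{a-1} = 1` and `b̃_a = 0`, for every `ε > 0` the conditional probability `μ((5/18 − ε)n < N < (5/18 + ε)n ∣ F_n) → 1` as `n → ∞`. -/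
theorem stmt_9 (μ : Measure (ℕ → ℤ)) (hμ : IsCDGProductMeasure μ) (ε : ℝ) (hε : 0 < ε) :
    Tendsto (fun n : ℕ =>
      μ[|firstOne n] {ω : ℕ → ℤ |
        (5 / 18 - ε) * n <
          (((Finset.Ico 1 n).filter (fun a =>
            btilde n ω (a - 1) = 1 ∧ btilde n ω a = 0)).card : ℝ) ∧
        (((Finset.Ico 1 n).filter (fun a =>
            btilde n ω (a - 1) = 1 ∧ btilde n ω a = 0)).card : ℝ) <
          (5 / 18 + ε) * n})
      atTop (nhds 1) := by
  have := hμ.isProbabilityMeasure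
  refine tendsto_cond_of_tendsto_measure_diff (G := typicalSet ε) measurableSet_firstOne
    (c := 1 / 3) (by norm_num) ?_ (hμ.tendsto_measure_firstOne_diff_typicalSet hε)
  filter_upwards [eventually_ge_atTop 1] with n hn
  calc (1 / 3 : ENNReal) = μ {ω | ∀ i < 1, ω i = 1} := by simpa using (hμ 1 1).symm
    _ ≤ μ (firstOne n) := measure_mono fun ω hω => ⟨0, hn, hω 0 one_pos, by simp⟩
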